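/- Let (Ω, F, P) be a probability space and (ℱ_n)_{n≥1} an increasing sequence of sub-σ-algebras of F. For each n let X_n : Ω → ℝ be ℱ_n-measurable, T_n : Ω → ℝ be ℱ_n-measurable, and W_n : Ω → ℝ be ℱ_{n+1}-measurable with X_{n+1} = T_n + W_n, E[W_n | ℱ_n] = 0 almost surely, and Σ_{n=1}^∞ E[W_n²] < ∞. Let α_n, β_n, γ_n : Ω → ℝ be nonnegative functions such that almost surely α_n → 0, almost surely Σ_n β_n < ∞, and almost surely Σ_n γ_n = ∞. Suppose there is x* ∈ ℝ such that for every n and almost every ω, |T_n(ω) − x*| ≤ max(α_n(ω), (1 + β_n(ω) − γ_n(ω))|X_n(ω) − x*|). Then X_n converges to x* almost surely. -/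

import Mathlib

/-!
Let `s n = ±1` be the sign of `T n - x*`. Then
`|X (n+1) - x*| ≤ max (|T n - x*| + s n * W n) |W n|`, and the martingale transform
`∑ s n * W n` is bounded in `L²`, hence converges almost surely. The rest is deterministic:
if `r n` is the tail of that series and `e n = |X n - x*|`, then `z n = e n + r n + ε` is
eventually nonnegative and satisfies `z (n+1) ≤ (1 + β n) * z n - γ n * e n` whenever
`e (n+1) > ε`. As `∑ β < ∞` and `∑ γ = ∞`, `e` drops below `ε`, and from then on `z` grows at
most by the factor `exp (∑ β)`.
-/

open MeasureTheory Filter Topology Finset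

section Deterministic

variable {e β γ r z : ℕ → ℝ}

theorem le_max_mul_exp_sum_of_le_max {a : ℝ} (ha : 0 ≤ a) (hβ : ∀ n, 0 ≤ β n)
    (hz : ∀ n, z (n + 1) ≤ max ((1 + β n) * z n) a) (n : ℕ) :
    z n ≤ max (z 0) a * Real.exp (∑ k ∈ range n, β k) := by
  induction n with
  | zero => simp
  | succ n ih =>
    have hM : 0 ≤ max (z 0) a := ha.trans (le_max_right _ _)
    refine (hz n).trans (max_le ?_ ?_)
    · calc (1 + β n) * z n
          ≤ (1 + β n) * (max (z 0) a * Real.exp (∑ k ∈ range n, β k)) :=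
            mul_le_mul_of_nonneg_left ih (by linarith [hβ n])
        _ ≤ Real.exp (β n) * (max (z 0) a * Real.exp (∑ k ∈ range n, β k)) := by
            gcongr; linarith [Real.add_one_le_exp (β n)]
        _ = max (z 0) a * Real.exp (∑ k ∈ range (n + 1), β k) := by
            rw [sum_range_succ, Real.exp_add]; ring
    · exact (le_max_right _ _).trans
        (le_mul_of_one_le_right hM (Real.one_le_exp (sum_nonneg fun k _ => hβ k)))

theorem summable_of_le_one_add_mul_sub {c : ℕ → ℝ} (hz0 : ∀ n, 0 ≤ z n) (hβ0 : ∀ n, 0 ≤ β n)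
    (hβ : Summable β) (hc : ∀ n, 0 ≤ c n) (hz : ∀ n, z (n + 1) ≤ (1 + β n) * z n - c n) :
    Summable c := by
  set K := z 0 * Real.exp (∑' k, β k)
  have hzK : ∀ n, z n ≤ K := fun n => by
    have h := le_max_mul_exp_sum_of_le_max le_rfl hβ0
      (fun n => (hz n).trans ((sub_le_self _ (hc n)).trans (le_max_left _ _))) n
    rw [max_eq_left (hz0 0)] at h
    exact h.trans (mul_le_mul_of_nonneg_left
      (Real.exp_le_exp.2 (hβ.sum_le_tsum _ fun k _ => hβ0 k)) (hz0 0))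
  have htelescope : ∀ n, z n + ∑ k ∈ range n, c k ≤ z 0 + ∑ k ∈ range n, β k * z k := by
    intro n
    induction n with
    | zero => simp
    | succ n ih => rw [sum_range_succ, sum_range_succ]; linarith [hz n]
  refine summable_of_sum_range_le hc (c := z 0 + K * ∑' k, β k) fun n => ?_
  have hβz : ∑ k ∈ range n, β k * z k ≤ K * ∑' k, β k :=
    calc ∑ k ∈ range n, β k * z k ≤ ∑ k ∈ range n, K * β k :=
          sum_le_sum fun k _ => by rw [mul_comm K]; exact mul_le_mul_of_nonneg_left (hzK k) (hβ0 k)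
      _ = K * ∑ k ∈ range n, β k := (mul_sum _ _ _).symm
      _ ≤ K * ∑' k, β k :=
          mul_le_mul_of_nonneg_left (hβ.sum_le_tsum _ fun k _ => hβ0 k) ((hz0 0).trans (hzK 0))
  linarith [htelescope n, hz0 n]

section Step

variable {ε : ℝ} {N : ℕ} (hr : ∀ n ≥ N, |r n| ≤ ε)
  (hstep : ∀ n ≥ N, e (n + 1) ≤ ε ∨
    e (n + 1) + r (n + 1) + ε ≤ (1 + β n) * (e n + r n + ε) - γ n * e n)
include hr hstep

theorem exists_ge_le_of_not_summable (he : ∀ n, 0 ≤ e n) (hβ0 : ∀ n, 0 ≤ β n) (hβ : Summable β)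
    (hγ0 : ∀ n, 0 ≤ γ n) (hγ : ¬ Summable γ) (hε : 0 < ε) : ∃ M ≥ N, e M ≤ ε := by
  by_contra! hbig
  have hz : ∀ k, e (N + k + 1) + r (N + k + 1) + ε ≤
      (1 + β (N + k)) * (e (N + k) + r (N + k) + ε) - ε * γ (N + k) := fun k => by
    rcases hstep (N + k) (by omega) with h | h
    · exact absurd h (hbig _ (by omega)).not_ge
    · nlinarith [hbig (N + k) (by omega), hγ0 (N + k)]
  have hsum := summable_of_le_one_add_mul_sub (z := fun k => e (N + k) + r (N + k) + ε)
    (fun k => by linarith [he (N + k), (abs_le.1 (hr (N + k) (by omega))).1])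
    (fun k => hβ0 (N + k)) ((summable_nat_add_iff N).2 hβ |>.congr fun k => by rw [add_comm])
    (fun k => mul_nonneg hε.le (hγ0 (N + k))) hz
  refine hγ ((summable_nat_add_iff N).1 ?_)
  exact ((summable_mul_left_iff hε.ne').1 hsum).congr fun k => by rw [add_comm]

theorem le_three_mul_exp_tsum_of_le (he : ∀ n, 0 ≤ e n) (hβ0 : ∀ n, 0 ≤ β n) (hβ : Summable β)
    (hγ0 : ∀ n, 0 ≤ γ n) (hε : 0 < ε) {M : ℕ} (hNM : N ≤ M) (heM : e M ≤ ε) {n : ℕ}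
    (hn : M ≤ n) : e n ≤ 3 * ε * Real.exp (∑' k, β k) := by
  obtain ⟨k, rfl⟩ := Nat.exists_eq_add_of_le hn
  have hz : ∀ j, e (M + j + 1) + r (M + j + 1) + ε ≤
      max ((1 + β (M + j)) * (e (M + j) + r (M + j) + ε)) (3 * ε) := fun j => by
    rcases hstep (M + j) (by omega) with h | h
    · exact le_max_of_le_right (by linarith [(abs_le.1 (hr (M + j + 1) (by omega))).2])
    · exact le_max_of_le_left (by nlinarith [hγ0 (M + j), he (M + j)])
  have hbound := le_max_mul_exp_sum_of_le_max (z := fun j => e (M + j) + r (M + j) + ε)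
    (a := 3 * ε) (by positivity) (fun j => hβ0 (M + j)) hz k
  have hz0 : e (M + 0) + r (M + 0) + ε ≤ 3 * ε := by
    simp only [add_zero]; linarith [(abs_le.1 (hr M hNM)).2]
  have hβk : ∑ j ∈ range k, β (M + j) ≤ ∑' k, β k := by
    rw [← Nat.add_sub_cancel_left (n := M) (m := k), ← sum_Ico_eq_sum_range]
    exact hβ.sum_le_tsum _ fun i _ => hβ0 i
  calc e (M + k) ≤ e (M + k) + r (M + k) + ε := by linarith [(abs_le.1 (hr (M + k) (by omega))).1]
    _ ≤ 3 * ε * Real.exp (∑ j ∈ range k, β (M + j)) := by rwa [max_eq_right hz0] at hbound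
    _ ≤ 3 * ε * Real.exp (∑' k, β k) := by gcongr

end Step

theorem tendsto_zero_of_le_max_one_add_sub_mul_add {w δ : ℕ → ℝ} {c : ℝ} (he : ∀ n, 0 ≤ e n)
    (hβ0 : ∀ n, 0 ≤ β n) (hβ : Summable β) (hγ0 : ∀ n, 0 ≤ γ n) (hγ : ¬ Summable γ)
    (hw : Tendsto (fun n => ∑ k ∈ range n, w k) atTop (𝓝 c)) (hδ : Tendsto δ atTop (𝓝 0))
    (hrec : ∀ n, e (n + 1) ≤ max ((1 + β n - γ n) * e n + w n) (δ n)) :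
    Tendsto e atTop (𝓝 0) := by
  set r : ℕ → ℝ := fun n => c - ∑ k ∈ range n, w k
  have hr : Tendsto r atTop (𝓝 0) := by simpa using hw.const_sub c
  have hrw : ∀ n, r n = w n + r (n + 1) := fun n => by simp only [r, sum_range_succ]; ring
  set K := Real.exp (∑' k, β k)
  have hK : 0 < K := Real.exp_pos _
  refine tendsto_order.2 ⟨fun a ha => .of_forall fun n => ha.trans_le (he n), fun a ha => ?_⟩
  set ε := a / (4 * K)
  have hε : 0 < ε := by positivity
  obtain ⟨N, hN⟩ := eventually_atTop.1 <|
    (hr.eventually (Icc_mem_nhds (neg_lt_zero.2 hε) hε)).and (hδ.eventually (ge_mem_nhds hε))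
  have hrN : ∀ n ≥ N, |r n| ≤ ε := fun n hn => abs_le.2 (hN n hn).1
  have hstep : ∀ n ≥ N, e (n + 1) ≤ ε ∨
      e (n + 1) + r (n + 1) + ε ≤ (1 + β n) * (e n + r n + ε) - γ n * e n := fun n hn => by
    rcases le_max_iff.1 (hrec n) with h | h
    · right
      nlinarith [hrw n, mul_nonneg (hβ0 n) (neg_le_iff_add_nonneg.1 (abs_le.1 (hrN n hn)).1)]
    · exact .inl (h.trans (hN n hn).2)
  obtain ⟨M, hNM, heM⟩ := exists_ge_le_of_not_summable hrN hstep he hβ0 hβ hγ0 hγ hε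
  filter_upwards [eventually_ge_atTop M] with n hn
  calc e n ≤ 3 * ε * K := le_three_mul_exp_tsum_of_le hrN hstep he hβ0 hβ hγ0 hε hNM heM hn
    _ < a := by
      have : 3 * ε * K = 3 / 4 * a := by
        simp only [ε]; field_simp [hK.ne']
      linarith

end Deterministic

theorem tendsto_zero_of_tendsto_sum_range {G : Type*} [AddCommGroup G] [TopologicalSpace G]
    [IsTopologicalAddGroup G] {f : ℕ → G} {c : G}
    (h : Tendsto (fun n => ∑ k ∈ range n, f k) atTop (𝓝 c)) : Tendsto f atTop (𝓝 0) := by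
  simpa [sum_range_succ] using (h.comp (tendsto_add_atTop_nat 1)).sub h

theorem abs_add_le_max_of_abs_le_max {a b α A : ℝ} (hα : 0 ≤ α) (ha : |a| ≤ max α A) :
    |a + b| ≤ max (A + (if 0 ≤ a then 1 else -1) * b) (α + |b|) := by
  rcases le_max_iff.1 ha with h | h <;> split_ifs <;> grind [abs_le, le_max_iff]

section Martingale

variable {Ω : Type*} {mΩ : MeasurableSpace Ω} {μ : Measure Ω}

theorem integral_mul_eq_zero_of_condExp_eq_zero {m : MeasurableSpace Ω} (hm : m ≤ mΩ)
    [SigmaFinite (μ.trim hm)] {f g : Ω → ℝ} (hf : StronglyMeasurable[m] f)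
    (hfg : Integrable (f * g) μ) (hg : Integrable g μ) (hcond : μ[g | m] =ᵐ[μ] 0) :
    ∫ ω, f ω * g ω ∂μ = 0 := by
  rw [← integral_condExp hm]
  refine integral_eq_zero_of_ae ((condExp_mul_of_stronglyMeasurable_left hf hfg hg).trans ?_)
  filter_upwards [hcond] with ω hω
  simp [hω]

theorem eLpNorm_one_le_of_memLp_two [IsFiniteMeasure μ] {f : Ω → ℝ} (hf : MemLp f 2 μ) :
    eLpNorm f 1 μ ≤ ENNReal.ofReal ((μ.real Set.univ + ∫ ω, f ω ^ 2 ∂μ) / 2) := by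
  rw [eLpNorm_one_eq_lintegral_enorm, ← ofReal_integral_norm_eq_lintegral_enorm
    (hf.integrable one_le_two)]
  refine ENNReal.ofReal_le_ofReal ?_
  calc ∫ ω, ‖f ω‖ ∂μ ≤ ∫ ω, (1 + f ω ^ 2) / 2 ∂μ :=
        integral_mono (hf.integrable one_le_two).norm
          (((integrable_const 1).add hf.integrable_sq).div_const 2) fun ω => by
            nlinarith [sq_nonneg (|f ω| - 1), sq_abs (f ω), Real.norm_eq_abs (f ω)]
    _ = (μ.real Set.univ + ∫ ω, f ω ^ 2 ∂μ) / 2 := by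
        rw [integral_div, integral_add (integrable_const 1) hf.integrable_sq, integral_const]
        simp

theorem memLp_two_of_tsum_lintegral_lt_top {f : ℕ → Ω → ℝ}
    (hf : ∀ n, AEStronglyMeasurable (f n) μ)
    (h : ∑' n, ∫⁻ ω, ENNReal.ofReal (f n ω ^ 2) ∂μ < ⊤) (n : ℕ) : MemLp (f n) 2 μ :=
  (memLp_two_iff_integrable_sq (hf n)).2 ⟨(hf n).pow 2,
    (hasFiniteIntegral_iff_ofReal (.of_forall fun _ => sq_nonneg _)).2
      ((ENNReal.le_tsum n).trans_lt h)⟩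

theorem summable_integral_sq_of_tsum_lintegral_lt_top {f : ℕ → Ω → ℝ}
    (hf : ∀ n, AEStronglyMeasurable (f n) μ)
    (h : ∑' n, ∫⁻ ω, ENNReal.ofReal (f n ω ^ 2) ∂μ < ⊤) :
    Summable fun n => ∫ ω, f n ω ^ 2 ∂μ :=
  (ENNReal.summable_toReal h.ne).congr fun n =>
    (integral_eq_lintegral_of_nonneg_ae (.of_forall fun _ => sq_nonneg _) ((hf n).pow 2)).symm

variable [IsFiniteMeasure μ] {ℱ : Filtration ℕ mΩ} {ξ : ℕ → Ω → ℝ}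

theorem stronglyMeasurable_sum_range_of_succ (hξ : ∀ n, StronglyMeasurable[ℱ (n + 1)] (ξ n))
    (n : ℕ) : StronglyMeasurable[ℱ n] (∑ k ∈ range n, ξ k) :=
  Finset.stronglyMeasurable_sum _ fun k hk => (hξ k).mono (ℱ.mono (Finset.mem_range.1 hk))

theorem integral_sq_sum_range (hξ : ∀ n, StronglyMeasurable[ℱ (n + 1)] (ξ n))
    (hL2 : ∀ n, MemLp (ξ n) 2 μ) (hcond : ∀ n, μ[ξ n | ℱ n] =ᵐ[μ] 0) (n : ℕ) :
    ∫ ω, (∑ k ∈ range n, ξ k ω) ^ 2 ∂μ = ∑ k ∈ range n, ∫ ω, ξ k ω ^ 2 ∂μ := by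
  induction n with
  | zero => simp
  | succ n ih =>
    set S := ∑ k ∈ range n, ξ k
    have hS : MemLp S 2 μ := memLp_finsetSum' _ fun k _ => hL2 k
    have hSξ : Integrable (fun ω => S ω * ξ n ω) μ := hS.integrable_mul (hL2 n)
    have horth : ∫ ω, S ω * ξ n ω ∂μ = 0 :=
      integral_mul_eq_zero_of_condExp_eq_zero (ℱ.le n) (stronglyMeasurable_sum_range_of_succ hξ n)
        hSξ ((hL2 n).integrable one_le_two) (hcond n)
    have hsq : ∀ ω, (∑ k ∈ range (n + 1), ξ k ω) ^ 2 = S ω ^ 2 + 2 * (S ω * ξ n ω) + ξ n ω ^ 2 :=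
      fun ω => by simp only [S, sum_range_succ, Finset.sum_apply]; ring
    simp_rw [hsq]
    rw [integral_add (f := fun ω => S ω ^ 2 + 2 * (S ω * ξ n ω))
      (hS.integrable_sq.add (hSξ.const_mul 2)) (hL2 n).integrable_sq,
      integral_add hS.integrable_sq (hSξ.const_mul 2), integral_const_mul, horth, sum_range_succ]
    simp only [S, Finset.sum_apply, ih]
    ring

theorem ae_exists_tendsto_sum_range (hξ : ∀ n, StronglyMeasurable[ℱ (n + 1)] (ξ n))
    (hL2 : ∀ n, MemLp (ξ n) 2 μ) (hcond : ∀ n, μ[ξ n | ℱ n] =ᵐ[μ] 0)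
    (hvar : Summable fun n => ∫ ω, ξ n ω ^ 2 ∂μ) :
    ∀ᵐ ω ∂μ, ∃ c, Tendsto (fun n => ∑ k ∈ range n, ξ k ω) atTop (𝓝 c) := by
  have hmart : Martingale (fun n => ∑ k ∈ range n, ξ k) ℱ μ :=
    martingale_of_condExp_sub_eq_zero_nat (stronglyMeasurable_sum_range_of_succ hξ)
      (fun n => integrable_finsetSum' _ fun k _ => (hL2 k).integrable one_le_two)
      fun n => by simpa [sum_range_succ] using hcond n
  have hbdd : ∀ n, eLpNorm (∑ k ∈ range n, ξ k) 1 μ ≤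
      ENNReal.ofReal ((μ.real Set.univ + ∑' k, ∫ ω, ξ k ω ^ 2 ∂μ) / 2) := fun n => by
    refine (eLpNorm_one_le_of_memLp_two (memLp_finsetSum' _ fun k _ => hL2 k)).trans ?_
    gcongr
    simp_rw [Finset.sum_apply, integral_sq_sum_range hξ hL2 hcond n]
    exact hvar.sum_le_tsum _ fun k _ => integral_nonneg fun _ => sq_nonneg _
  simpa [Finset.sum_apply] using hmart.submartingale.exists_ae_tendsto_of_bdd hbdd

theorem ae_exists_tendsto_sum_range_mul {s : ℕ → Ω → ℝ}
    (hs : ∀ n, StronglyMeasurable[ℱ n] (s n)) (hs1 : ∀ n ω, |s n ω| ≤ 1)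
    (hξ : ∀ n, StronglyMeasurable[ℱ (n + 1)] (ξ n))
    (hL2 : ∀ n, MemLp (ξ n) 2 μ) (hcond : ∀ n, μ[ξ n | ℱ n] =ᵐ[μ] 0)
    (hvar : Summable fun n => ∫ ω, ξ n ω ^ 2 ∂μ) :
    ∀ᵐ ω ∂μ, ∃ c, Tendsto (fun n => ∑ k ∈ range n, s k ω * ξ k ω) atTop (𝓝 c) := by
  have hsξ : ∀ n ω, (s n ω * ξ n ω) ^ 2 ≤ ξ n ω ^ 2 := fun n ω => by
    rw [mul_pow]
    exact mul_le_of_le_one_left (sq_nonneg _) (sq_le_one_iff_abs_le_one _ |>.2 (hs1 n ω))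
  refine ae_exists_tendsto_sum_range (ξ := fun n => s n * ξ n)
    (fun n => ((hs n).mono (ℱ.mono n.le_succ)).mul (hξ n)) (fun n => ?_) (fun n => ?_) ?_
  · refine (hL2 n).of_le (((hs n).mono (ℱ.le n)).aestronglyMeasurable.mul
      (hL2 n).aestronglyMeasurable) (.of_forall fun ω => ?_)
    simpa [abs_mul] using mul_le_of_le_one_left (abs_nonneg _) (hs1 n ω)
  · refine (condExp_stronglyMeasurable_mul_of_bound (ℱ.le n) (hs n)
      ((hL2 n).integrable one_le_two) 1 (.of_forall fun ω => by simpa using hs1 n ω)).trans ?_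
    filter_upwards [hcond n] with ω hω
    simp [hω]
  · exact hvar.of_nonneg_of_le (fun n => integral_nonneg fun _ => sq_nonneg _) fun n =>
      integral_mono (hL2 n |>.integrable_sq.mono' ((((hs n).mono (ℱ.le n)).aestronglyMeasurable.mul
        (hL2 n).aestronglyMeasurable).pow 2) (.of_forall fun ω =>
          (Real.norm_of_nonneg (sq_nonneg _)).trans_le (hsξ n ω))) (hL2 n).integrable_sq (hsξ n)

end Martingale

theorem dvoretzky_extended_mult_bound_general
    {Ω : Type*} {mΩ : MeasurableSpace Ω} (μ : Measure Ω) [IsProbabilityMeasure μ]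
    (ℱ : Filtration ℕ mΩ)
    (X : ℕ → Ω → ℝ)
    (T : ℕ → Ω → ℝ) (hT : ∀ n, Measurable[ℱ n] (T n))
    (W : ℕ → Ω → ℝ) (hW : ∀ n, Measurable[ℱ (n + 1)] (W n))
    (hrec : ∀ n ω, X (n + 1) ω = T n ω + W n ω)
    (hcond : ∀ n, μ[W n | ℱ n] =ᵐ[μ] 0)
    (hvar : ∑' n, ∫⁻ ω, ENNReal.ofReal ((W n ω) ^ 2) ∂μ < ⊤)
    (α β γ : ℕ → Ω → ℝ)
    (hα0 : ∀ n ω, 0 ≤ α n ω) (hβ0 : ∀ n ω, 0 ≤ β n ω) (hγ0 : ∀ n ω, 0 ≤ γ n ω)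
    (hα : ∀ᵐ ω ∂μ, Tendsto (fun n => α n ω) atTop (𝓝 0))
    (hβ : ∀ᵐ ω ∂μ, Summable (fun n => β n ω))
    (hγ : ∀ᵐ ω ∂μ, Tendsto (fun n => ∑ k ∈ Finset.range n, γ k ω) atTop atTop)
    (xstar : ℝ)
    (hbound : ∀ n, ∀ᵐ ω ∂μ,
      |T n ω - xstar| ≤ max (α n ω) ((1 + β n ω - γ n ω) * |X n ω - xstar|)) :
    ∀ᵐ ω ∂μ, Tendsto (fun n => X n ω) atTop (𝓝 xstar) := by
  set s : ℕ → Ω → ℝ := fun n ω => if 0 ≤ T n ω - xstar then 1 else -1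
  have hs : ∀ n, StronglyMeasurable[ℱ n] (s n) := fun n =>
    (Measurable.ite (measurableSet_le measurable_const ((hT n).sub_const _)) measurable_const
      measurable_const).stronglyMeasurable
  have hs1 : ∀ n ω, |s n ω| = 1 := fun n ω => by simp only [s]; split_ifs <;> simp
  have hWm : ∀ n, AEStronglyMeasurable (W n) μ := fun n =>
    ((hW n).mono (ℱ.le _) le_rfl).aestronglyMeasurable
  have hconv := ae_exists_tendsto_sum_range_mul hs (fun n ω => (hs1 n ω).le)
    (fun n => (hW n).stronglyMeasurable) (memLp_two_of_tsum_lintegral_lt_top hWm hvar) hcond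
    (summable_integral_sq_of_tsum_lintegral_lt_top hWm hvar)
  filter_upwards [hα, hβ, hγ, hconv, ae_all_iff.2 hbound] with ω hαω hβω hγω ⟨c, hc⟩ hbω
  have hW0 : Tendsto (fun n => |W n ω|) atTop (𝓝 0) := by
    simpa [abs_mul, hs1] using (tendsto_zero_of_tendsto_sum_range hc).abs
  rw [tendsto_iff_dist_tendsto_zero]
  simp_rw [Real.dist_eq]
  refine tendsto_zero_of_le_max_one_add_sub_mul_add (fun n => abs_nonneg _) (fun n => hβ0 n ω)
    hβω (fun n => hγ0 n ω) ((not_summable_iff_tendsto_nat_atTop_of_nonneg (hγ0 · ω)).2 hγω) hc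
    (by simpa using hαω.add hW0) fun n => ?_
  rw [hrec, add_sub_right_comm]
  exact abs_add_le_max_of_abs_le_max (hα0 n ω) (hbω n)

/-- Corollary of the extended Dvoretzky theorem with the multiplicative bound
`max (α n) ((1 + β n - γ n) * |X n - x*|)` on the operator `T n`. -/
theorem dvoretzky_extended_mult_bound
    {Ω : Type*} {mΩ : MeasurableSpace Ω} (μ : Measure Ω) [IsProbabilityMeasure μ]
    (ℱ : Filtration ℕ mΩ)
    (X : ℕ → Ω → ℝ) (hX : Adapted ℱ X)
    (T : ℕ → Ω → ℝ) (hT : ∀ n, Measurable[ℱ n] (T n))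
    (W : ℕ → Ω → ℝ) (hW : ∀ n, Measurable[ℱ (n + 1)] (W n))
    (hrec : ∀ n ω, X (n + 1) ω = T n ω + W n ω)
    (hcond : ∀ n, μ[W n | ℱ n] =ᵐ[μ] 0)
    (hvar : ∑' n, ∫⁻ ω, ENNReal.ofReal ((W n ω) ^ 2) ∂μ < ⊤)
    (α β γ : ℕ → Ω → ℝ)
    (hα0 : ∀ n ω, 0 ≤ α n ω) (hβ0 : ∀ n ω, 0 ≤ β n ω) (hγ0 : ∀ n ω, 0 ≤ γ n ω)
    (hα : ∀ᵐ ω ∂μ, Tendsto (fun n => α n ω) atTop (𝓝 0))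
    (hβ : ∀ᵐ ω ∂μ, Summable (fun n => β n ω))
    (hγ : ∀ᵐ ω ∂μ, Tendsto (fun n => ∑ k ∈ Finset.range n, γ k ω) atTop atTop)
    (xstar : ℝ)
    (hbound : ∀ n, ∀ᵐ ω ∂μ,
      |T n ω - xstar| ≤ max (α n ω) ((1 + β n ω - γ n ω) * |X n ω - xstar|)) :
    ∀ᵐ ω ∂μ, Tendsto (fun n => X n ω) atTop (𝓝 xstar) :=
  dvoretzky_extended_mult_bound_general μ ℱ X T hT W hW hrec hcond hvar α β γ hα0 hβ0 hγ0 hα hβ hγ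
    xstar hbound
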